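/- arXiv:2203.08561 — 5 statements merged into one kernel-verified Lean document; each statement's English description precedes it below -/
import Mathlib

section
/- Let $A \in \mathbb{R}^{n \times n}$ and $\bar t \in [0,1)$. Suppose $\xi, \eta \in \mathbb{R}^n$ satisfy $\xi \geq 0$, $\eta \geq 0$, $(1-\bar t)\big[(A + A^T)\xi - \eta\big] + \bar t \xi = 0$, and $\xi_i \eta_i + \xi_i (A\xi)_i = 0$ for all $i$. Then $\xi^T A \xi \leq 0$; moreover if $\bar t = 0$ then $\xi^T A \xi = 0$, and if $\bar t \in (0,1)$ and $\xi \neq 0$ then $\xi^T A \xi < 0$. -/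
/-!
Dotting the limit equation with `ξ` gives `(1 - t̄)(2 ξᵀAξ - ξᵀη) + t̄ ‖ξ‖² = 0`, and summing the
complementarity conditions gives `ξᵀη = -ξᵀAξ`. Hence `3 (1 - t̄) ξᵀAξ = -t̄ ‖ξ‖²`, which determines
the sign of `ξᵀAξ`.
-/

open Matrix BigOperators

section

variable {ι R : Type*} [Fintype ι]

theorem dotProduct_eq_neg_of_forall_mul_add_mul_eq_zero [CommRing R] {x y z : ι → R}
    (h : ∀ i, x i * y i + x i * z i = 0) : x ⬝ᵥ y = -(x ⬝ᵥ z) := by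
  rw [eq_neg_iff_add_eq_zero, ← dotProduct_add]
  exact Finset.sum_eq_zero fun i _ => (mul_add _ _ _).trans (h i)

theorem three_mul_quadForm_of_homotopy_limit [CommRing R] (A : Matrix ι ι R) (t : R)
    (ξ η : ι → R) (heq : (1 - t) • ((A + Aᵀ) *ᵥ ξ - η) + t • ξ = 0)
    (hcomp : ∀ i, ξ i * η i + ξ i * (A *ᵥ ξ) i = 0) :
    (1 - t) * (3 * (ξ ⬝ᵥ (A *ᵥ ξ))) + t * (ξ ⬝ᵥ ξ) = 0 := by
  have hdot := congrArg (ξ ⬝ᵥ ·) heq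
  simp only [dotProduct_add, dotProduct_smul, dotProduct_sub, add_mulVec, dotProduct_zero,
    smul_eq_mul, dotProduct_transpose_mulVec] at hdot
  linear_combination hdot + (1 - t) * dotProduct_eq_neg_of_forall_mul_add_mul_eq_zero hcomp

end

theorem stmt1_general (n : ℕ) (A : Matrix (Fin n) (Fin n) ℝ)
    (tbar : ℝ) (ht : tbar ∈ Set.Ico (0:ℝ) 1)
    (ξ η : Fin n → ℝ)
    (heq : (1 - tbar) • ((A + Aᵀ) *ᵥ ξ - η) + tbar • ξ = 0)
    (hcomp : ∀ i, ξ i * η i + ξ i * (A *ᵥ ξ) i = 0) :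
    ξ ⬝ᵥ (A *ᵥ ξ) ≤ 0 ∧
    (tbar = 0 → ξ ⬝ᵥ (A *ᵥ ξ) = 0) ∧
    (tbar ∈ Set.Ioo (0:ℝ) 1 → ξ ≠ 0 → ξ ⬝ᵥ (A *ᵥ ξ) < 0) := by
  obtain ⟨ht0, ht1⟩ := ht
  have hpos : 0 < 3 * (1 - tbar) := by linarith
  have hq : ξ ⬝ᵥ (A *ᵥ ξ) = -(tbar / (3 * (1 - tbar))) * (ξ ⬝ᵥ ξ) := by
    field_simp
    linear_combination three_mul_quadForm_of_homotopy_limit A tbar ξ η heq hcomp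
  have hsq : 0 ≤ ξ ⬝ᵥ ξ := by simpa using dotProduct_star_self_nonneg ξ
  refine ⟨?_, fun h0 => by simp [hq, h0], fun ⟨htpos, _⟩ hne => ?_⟩
  · rw [hq]
    exact mul_nonpos_of_nonpos_of_nonneg (neg_nonpos.2 (div_nonneg ht0 hpos.le)) hsq
  · rw [hq]
    exact mul_neg_of_neg_of_pos (neg_neg_of_pos (div_pos htpos hpos))
      (by simpa using dotProduct_star_self_pos_iff.2 hne)

theorem stmt1 (n : ℕ) (A : Matrix (Fin n) (Fin n) ℝ)
    (tbar : ℝ) (ht : tbar ∈ Set.Ico (0:ℝ) 1)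
    (ξ η : Fin n → ℝ)
    (hξ : ∀ i, 0 ≤ ξ i) (hη : ∀ i, 0 ≤ η i)
    (heq : (1 - tbar) • ((A + Aᵀ) *ᵥ ξ - η) + tbar • ξ = 0)
    (hcomp : ∀ i, ξ i * η i + ξ i * (A *ᵥ ξ) i = 0) :
    ξ ⬝ᵥ (A *ᵥ ξ) ≤ 0 ∧
    (tbar = 0 → ξ ⬝ᵥ (A *ᵥ ξ) = 0) ∧
    (tbar ∈ Set.Ioo (0:ℝ) 1 → ξ ≠ 0 → ξ ⬝ᵥ (A *ᵥ ξ) < 0) :=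
  stmt1_general n A tbar ht ξ η heq hcomp
end

section
/- Let $A \in \mathbb{R}^{n \times n}$ and $\bar t \in [0,1)$. Suppose $\xi', \eta' \in \mathbb{R}^n$ satisfy $\xi' \geq 0$, $\eta' \geq 0$, $(1-\bar t)\big[(A+A^T)\xi' - (1-\bar t)\eta'\big] + \bar t \xi' = 0$, and $\xi'_i \eta'_i + \xi'_i (A\xi')_i = 0$ for all $i$. Then $(\xi')^T A \xi' = -\frac{\bar t}{(1-\bar t)(3 - \bar t)} (\xi')^T \xi' \leq 0$. -/
/-!
Pairing the stationarity equation with `ξ'` turns it into a scalar identity: the symmetric part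
`A + Aᵀ` contributes `2 ξ'ᵀAξ'`, and complementarity replaces `ξ'ᵀη'` by `-ξ'ᵀAξ'`. This leaves
`(1 - t̄)(3 - t̄) ξ'ᵀAξ' = -t̄ ξ'ᵀξ'`, and both factors on the left are positive for `t̄ ∈ [0, 1)`.
-/

open Matrix BigOperators

namespace Matrix

variable {ι R : Type*} [Fintype ι] [CommRing R]

theorem dotProduct_add_transpose_mulVec_self (A : Matrix ι ι R) (x : ι → R) :
    x ⬝ᵥ ((A + Aᵀ) *ᵥ x) = 2 * (x ⬝ᵥ (A *ᵥ x)) := by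
  rw [add_mulVec, dotProduct_add, dotProduct_transpose_mulVec, two_mul]

theorem dotProduct_eq_neg_of_mul_add_mul_eq_zero {x y z : ι → R}
    (h : ∀ i, x i * y i + x i * z i = 0) : x ⬝ᵥ y = -(x ⬝ᵥ z) := by
  rw [eq_neg_iff_add_eq_zero, dotProduct, dotProduct, ← Finset.sum_add_distrib]
  exact Finset.sum_eq_zero fun i _ => h i

theorem mul_dotProduct_mulVec_self_eq_of_stationary (A : Matrix ι ι R) (t : R) {x y : ι → R}
    (heq : (1 - t) • ((A + Aᵀ) *ᵥ x - (1 - t) • y) + t • x = 0)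
    (hcomp : ∀ i, x i * y i + x i * (A *ᵥ x) i = 0) :
    (1 - t) * (3 - t) * (x ⬝ᵥ (A *ᵥ x)) = -t * (x ⬝ᵥ x) := by
  have hpair := congrArg (x ⬝ᵥ ·) heq
  simp only [dotProduct_add, dotProduct_smul, dotProduct_sub, smul_eq_mul, dotProduct_zero,
    dotProduct_add_transpose_mulVec_self, dotProduct_eq_neg_of_mul_add_mul_eq_zero hcomp]
    at hpair
  linear_combination hpair

end Matrix

theorem stmt2_general (n : ℕ) (A : Matrix (Fin n) (Fin n) ℝ)
    (tbar : ℝ) (ht : tbar ∈ Set.Ico (0:ℝ) 1)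
    (ξ' η' : Fin n → ℝ)
    (heq : (1 - tbar) • ((A + Aᵀ) *ᵥ ξ' - (1 - tbar) • η') + tbar • ξ' = 0)
    (hcomp : ∀ i, ξ' i * η' i + ξ' i * (A *ᵥ ξ') i = 0) :
    ξ' ⬝ᵥ (A *ᵥ ξ') = -(tbar / ((1 - tbar) * (3 - tbar))) * (ξ' ⬝ᵥ ξ') ∧
    ξ' ⬝ᵥ (A *ᵥ ξ') ≤ 0 := by
  obtain ⟨ht0, ht1⟩ := ht
  have hden : 0 < (1 - tbar) * (3 - tbar) := by nlinarith
  have hkey := mul_dotProduct_mulVec_self_eq_of_stationary A tbar heq hcomp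
  have hquad : ξ' ⬝ᵥ (A *ᵥ ξ') = -(tbar / ((1 - tbar) * (3 - tbar))) * (ξ' ⬝ᵥ ξ') := by
    rw [← neg_div, div_mul_eq_mul_div, eq_div_iff hden.ne']
    linear_combination hkey
  have hcoef : 0 ≤ tbar / ((1 - tbar) * (3 - tbar)) := div_nonneg ht0 hden.le
  have hself : 0 ≤ ξ' ⬝ᵥ ξ' := Finset.sum_nonneg fun i _ => mul_self_nonneg (ξ' i)
  refine ⟨hquad, ?_⟩
  rw [hquad, neg_mul]
  exact neg_nonpos.mpr (mul_nonneg hcoef hself)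

theorem stmt2 (n : ℕ) (A : Matrix (Fin n) (Fin n) ℝ)
    (tbar : ℝ) (ht : tbar ∈ Set.Ico (0:ℝ) 1)
    (ξ' η' : Fin n → ℝ)
    (hξ : ∀ i, 0 ≤ ξ' i) (hη : ∀ i, 0 ≤ η' i)
    (heq : (1 - tbar) • ((A + Aᵀ) *ᵥ ξ' - (1 - tbar) • η') + tbar • ξ' = 0)
    (hcomp : ∀ i, ξ' i * η' i + ξ' i * (A *ᵥ ξ') i = 0) :
    ξ' ⬝ᵥ (A *ᵥ ξ') = -(tbar / ((1 - tbar) * (3 - tbar))) * (ξ' ⬝ᵥ ξ') ∧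
    ξ' ⬝ᵥ (A *ᵥ ξ') ≤ 0 :=
  stmt2_general n A tbar ht ξ' η' heq hcomp
end

section
/- Let $A \in \mathbb{R}^{n \times n}$ and $\bar t \in [0,1)$. Suppose $\xi, \eta, \zeta \in \mathbb{R}^n$ satisfy $\xi, \eta, \zeta \geq 0$ componentwise, $(1-\bar t)\big[(A+A^T)\xi - \eta - A^T \zeta\big] + \bar t \xi = 0$, $\xi_i \eta_i + \xi_i (A\xi)_i = 0$ for all $i$, and $\zeta_i (A\xi)_i = 0$ for all $i$. Then $\xi^T A \xi \leq 0$, with equality when $\bar t = 0$, and strict inequality when $\bar t \in (0,1)$ and $\xi \neq 0$. -/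
/-!
Pairing the stationarity equation with `ξ` turns each of its terms into a multiple of
`q = ξᵀAξ`: the symmetric part gives `2q`, the complementarity conditions give `ξᵀη = -q` and
`ξᵀAᵀζ = ζᵀAξ = 0`. Hence `3(1 - t̄) q + t̄ ‖ξ‖² = 0`, and the sign of `q` is read off.
-/

open Matrix

namespace Matrix

variable {ι R : Type*} [Fintype ι]

theorem dotProduct_eq_zero_of_forall_mul_eq_zero [NonUnitalNonAssocSemiring R] {u v : ι → R}
    (h : ∀ i, u i * v i = 0) : u ⬝ᵥ v = 0 :=
  Finset.sum_eq_zero fun i _ => h i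

theorem dotProduct_self_nonneg [Ring R] [LinearOrder R] [IsStrictOrderedRing R] (v : ι → R) :
    0 ≤ v ⬝ᵥ v :=
  Fintype.sum_nonneg fun i => mul_self_nonneg (v i)

theorem dotProduct_self_pos [Ring R] [LinearOrder R] [IsStrictOrderedRing R] {v : ι → R}
    (hv : v ≠ 0) : 0 < v ⬝ᵥ v :=
  (dotProduct_self_nonneg v).lt_of_ne' (dotProduct_self_eq_zero.not.mpr hv)

theorem three_mul_one_sub_mul_quadForm_add_mul_dotProduct_self_eq_zero [CommRing R]
    (A : Matrix ι ι R) (t : R) {ξ η ζ : ι → R}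
    (heq : (1 - t) • ((A + Aᵀ) *ᵥ ξ - η - Aᵀ *ᵥ ζ) + t • ξ = 0)
    (hcomp1 : ∀ i, ξ i * η i + ξ i * (A *ᵥ ξ) i = 0)
    (hcomp2 : ∀ i, ζ i * (A *ᵥ ξ) i = 0) :
    3 * (1 - t) * (ξ ⬝ᵥ (A *ᵥ ξ)) + t * (ξ ⬝ᵥ ξ) = 0 := by
  have hη : ξ ⬝ᵥ η + ξ ⬝ᵥ (A *ᵥ ξ) = 0 := by
    rw [← dotProduct_add]
    exact dotProduct_eq_zero_of_forall_mul_eq_zero fun i => (mul_add _ _ _).trans (hcomp1 i)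
  have hζ : ξ ⬝ᵥ (Aᵀ *ᵥ ζ) = 0 := by
    rw [dotProduct_transpose_mulVec]
    exact dotProduct_eq_zero_of_forall_mul_eq_zero hcomp2
  have hsymm : ξ ⬝ᵥ (Aᵀ *ᵥ ξ) = ξ ⬝ᵥ (A *ᵥ ξ) := dotProduct_transpose_mulVec A ξ ξ
  have h := congrArg (ξ ⬝ᵥ ·) heq
  simp only [dotProduct_add, dotProduct_smul, dotProduct_sub, dotProduct_zero, add_mulVec,
    smul_eq_mul, hsymm, hζ] at h
  linear_combination h + (1 - t) * hη

end Matrix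

theorem stmt3_general (n : ℕ) (A : Matrix (Fin n) (Fin n) ℝ)
    (tbar : ℝ) (ht : tbar ∈ Set.Ico (0:ℝ) 1)
    (ξ η ζ : Fin n → ℝ)
    (heq : (1 - tbar) • ((A + Aᵀ) *ᵥ ξ - η - Aᵀ *ᵥ ζ) + tbar • ξ = 0)
    (hcomp1 : ∀ i, ξ i * η i + ξ i * (A *ᵥ ξ) i = 0)
    (hcomp2 : ∀ i, ζ i * (A *ᵥ ξ) i = 0) :
    ξ ⬝ᵥ (A *ᵥ ξ) ≤ 0 ∧
    (tbar = 0 → ξ ⬝ᵥ (A *ᵥ ξ) = 0) ∧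
    (tbar ∈ Set.Ioo (0:ℝ) 1 → ξ ≠ 0 → ξ ⬝ᵥ (A *ᵥ ξ) < 0) := by
  obtain ⟨ht0, ht1⟩ := ht
  have key :=
    three_mul_one_sub_mul_quadForm_add_mul_dotProduct_self_eq_zero A tbar heq hcomp1 hcomp2
  have hξξ := dotProduct_self_nonneg ξ
  refine ⟨by nlinarith, fun h0 => ?_, fun ⟨htpos, _⟩ hξ0 => ?_⟩
  · subst h0
    linarith
  · nlinarith [dotProduct_self_pos hξ0]

theorem stmt3 (n : ℕ) (A : Matrix (Fin n) (Fin n) ℝ)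
    (tbar : ℝ) (ht : tbar ∈ Set.Ico (0:ℝ) 1)
    (ξ η ζ : Fin n → ℝ)
    (hξ : ∀ i, 0 ≤ ξ i) (hη : ∀ i, 0 ≤ η i) (hζ : ∀ i, 0 ≤ ζ i)
    (heq : (1 - tbar) • ((A + Aᵀ) *ᵥ ξ - η - Aᵀ *ᵥ ζ) + tbar • ξ = 0)
    (hcomp1 : ∀ i, ξ i * η i + ξ i * (A *ᵥ ξ) i = 0)
    (hcomp2 : ∀ i, ζ i * (A *ᵥ ξ) i = 0) :
    ξ ⬝ᵥ (A *ᵥ ξ) ≤ 0 ∧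
    (tbar = 0 → ξ ⬝ᵥ (A *ᵥ ξ) = 0) ∧
    (tbar ∈ Set.Ioo (0:ℝ) 1 → ξ ≠ 0 → ξ ⬝ᵥ (A *ᵥ ξ) < 0) :=
  stmt3_general n A tbar ht ξ η ζ heq hcomp1 hcomp2
end

section
/- Let $t^k \in (0,1)$ with $t^k \to 1$, and suppose sequences $x^k, y_1^k \in \mathbb{R}^n$ with $x^k \to \bar x$, $(y_1^k)_i \to \infty$ for some fixed $i$, satisfy $(y_1^k)_i x_i^k - t^k (y_1^{(0)})_i x_i^{(0)} + (1 - t^k) x_i^k (A x^k + q)_i = 0$ and $x_i^{(0)} = \frac{1-t^k}{t^k}\big[((A+A^T)x^k)_i + q_i - (y_1^k)_i - (A^T y_2^k)_i\big] + x_i^k$ where $y_2^k \to \bar y_2$ is bounded. Then $x_i^k \to 0$ and $x_i^{(0)} = -\lim_k \frac{1-t^k}{t^k}(y_1^k)_i \leq 0$. In particular, if $x_i^{(0)} > 0$, no such sequences exist, i.e., $y_1^k$ cannot blow up as $t^k \to 1$. -/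
/-! From the first equation, `(y₁)ᵢ xᵢ → (y₁⁰)ᵢ xᵢ⁰` as `t → 1`; since `(y₁)ᵢ → ∞`, this forces
`xᵢ → 0`. In the second equation every other term is bounded and multiplied by `(1 - t)/t → 0`, so it
says `xᵢ⁰ = lim -((1 - t)/t) (y₁)ᵢ`, a limit of nonpositive numbers. -/

open Matrix Filter Topology

theorem Filter.Tendsto.const_mulVec {α m n R : Type*} [Fintype n] [TopologicalSpace R]
    [NonUnitalNonAssocSemiring R] [IsTopologicalSemiring R] {l : Filter α} (M : Matrix m n R)
    {v : α → n → R} {w : n → R} (hv : Tendsto v l (𝓝 w)) :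
    Tendsto (fun k => M *ᵥ v k) l (𝓝 (M *ᵥ w)) :=
  ((continuous_const.matrix_mulVec continuous_id).tendsto w).comp hv

theorem tendsto_zero_of_tendsto_mul_of_tendsto_atTop {α 𝕜 : Type*} [Field 𝕜] [LinearOrder 𝕜]
    [IsStrictOrderedRing 𝕜] [TopologicalSpace 𝕜] [OrderTopology 𝕜] {l : Filter α}
    {a b : α → 𝕜} {c : 𝕜} (ha : Tendsto a l atTop) (hab : Tendsto (fun k => a k * b k) l (𝓝 c)) :
    Tendsto b l (𝓝 0) := by
  have h := hab.mul ha.inv_tendsto_atTop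
  rw [mul_zero] at h
  refine h.congr' ?_
  filter_upwards [ha.eventually_ne_atTop 0] with k hk
  rw [Pi.inv_apply, mul_comm, inv_mul_cancel_left₀ hk]

theorem stmt13 (n : ℕ) (A : Matrix (Fin n) (Fin n) ℝ) (q x0 y10 : Fin n → ℝ)
    (t : ℕ → ℝ) (ht : ∀ k, t k ∈ Set.Ioo (0:ℝ) 1)
    (htlim : Tendsto t atTop (nhds 1))
    (x y1 y2 : ℕ → Fin n → ℝ)
    (xbar y2bar : Fin n → ℝ)
    (hxlim : ∀ j, Tendsto (fun k => x k j) atTop (nhds (xbar j)))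
    (hy2lim : ∀ j, Tendsto (fun k => y2 k j) atTop (nhds (y2bar j)))
    (i : Fin n)
    (hy1blow : Tendsto (fun k => y1 k i) atTop atTop)
    (heq1 : ∀ k, y1 k i * x k i - t k * (y10 i * x0 i)
      + (1 - t k) * (x k i * (A *ᵥ x k + q) i) = 0)
    (heq2 : ∀ k, x0 i = (1 - t k) / t k *
      (((A + Aᵀ) *ᵥ x k) i + q i - y1 k i - (Aᵀ *ᵥ y2 k) i) + x k i) :
    Tendsto (fun k => x k i) atTop (nhds 0) ∧
    Tendsto (fun k => -((1 - t k) / t k * y1 k i)) atTop (nhds (x0 i)) ∧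
    x0 i ≤ 0 ∧ (0 < x0 i → False) := by
  have hx : Tendsto x atTop (nhds xbar) := tendsto_pi_nhds.2 hxlim
  have hy2 : Tendsto y2 atTop (nhds y2bar) := tendsto_pi_nhds.2 hy2lim
  have hs : Tendsto (fun k => (1 - t k) / t k) atTop (nhds 0) := by
    simpa [div_eq_mul_inv] using
      ((tendsto_const_nhds (x := (1 : ℝ))).sub htlim).mul (htlim.inv₀ one_ne_zero)
  have hprod : Tendsto (fun k => y1 k i * x k i) atTop (nhds (y10 i * x0 i)) := by
    have hlim : Tendsto (fun k => t k * (y10 i * x0 i) - (1 - t k) * (x k i * (A *ᵥ x k + q) i))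
        atTop (nhds (y10 i * x0 i)) := by
      simpa using (htlim.mul_const _).sub (((tendsto_const_nhds (x := (1 : ℝ))).sub htlim).mul
        ((hx.apply_nhds i).mul (((hx.const_mulVec A).add_const q).apply_nhds i)))
    exact hlim.congr fun k => by linarith [heq1 k]
  have hxi : Tendsto (fun k => x k i) atTop (nhds 0) :=
    tendsto_zero_of_tendsto_mul_of_tendsto_atTop hy1blow hprod
  have hkey : Tendsto (fun k => -((1 - t k) / t k * y1 k i)) atTop (nhds (x0 i)) := by
    have hlim : Tendsto (fun k => x0 i - x k i - (1 - t k) / t k *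
        (((A + Aᵀ) *ᵥ x k) i + q i - (Aᵀ *ᵥ y2 k) i)) atTop (nhds (x0 i)) := by
      simpa using (tendsto_const_nhds.sub hxi).sub (hs.mul
        ((((hx.const_mulVec _).apply_nhds i).add_const _).sub ((hy2.const_mulVec _).apply_nhds i)))
    exact hlim.congr fun k => by linear_combination heq2 k
  have hle : x0 i ≤ 0 := by
    refine le_of_tendsto hkey ?_
    filter_upwards [hy1blow.eventually_ge_atTop 0] with k hk
    have hsk : 0 ≤ (1 - t k) / t k := div_nonneg (by linarith [(ht k).2]) (ht k).1.le
    linarith [mul_nonneg hsk hk]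
  exact ⟨hxi, hkey, hle, hle.not_gt⟩
end

section
/- Consider the vertical linear complementarity problem arising from a zero-sum discounted ARAT game: find $\xi, \eta \in \mathbb{R}^d$ and slacks $w^1_i(s) \geq 0$ ($i \in A_s$), $w^2_j(s) \geq 0$ ($j \in B_s$) such that $w^1_i(s) = -r^1_i(s) - \beta\sum_{s'} p^1_i(s,s')\eta(s') + \xi(s) - \beta\sum_{s'} p^1_i(s,s')\xi(s')$ and $w^2_j(s) = r^2_j(s) - \eta(s) + \beta\sum_{s'} p^2_j(s,s')\eta(s') + \beta\sum_{s'} p^2_j(s,s')\xi(s')$, with $\eta(s)\prod_{i\in A_s} w^1_i(s) = 0$ and $\xi(s)\prod_{j\in B_s} w^2_j(s) = 0$ for all $s$. Then if $(\xi, \eta)$ solves this VLCP with, for each state $s$, some $i(s)$ with $w^1_{i(s)}(s) = 0$ and some $j(s)$ with $w^2_{j(s)}(s) = 0$, the vector $v(s) = \xi(s) + \eta(s)$ satisfies the Shapley optimality inequalities: $r^1_i(s) + r^2_{j(s)}(s) + \beta \sum_{s'} p_{i,j(s)}(s,s') v(s') \leq v(s)$ for all $i \in A_s$ and $r^1_{i(s)}(s)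 + r^2_j(s) + \beta \sum_{s'} p_{i(s),j}(s,s') v(s') \geq v(s)$ for all $j \in B_s$, where $p_{ij}(s,s') = p^1_i(s,s') + p^2_j(s,s')$. -/
/-!
Substituting the two slack equations into the Shapley expression makes everything but the
slacks cancel: for every pair of actions `(i, j)` in state `s`,
`r¹ᵢ(s) + r²ⱼ(s) + β ∑ (p¹ᵢ + p²ⱼ) v = v(s) - w¹ᵢ(s) + w²ⱼ(s)`.
Nonnegativity of the slacks and the vanishing of `w²_{j(s)}(s)` and `w¹_{i(s)}(s)` then give the
two Shapley inequalities.
-/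

theorem additive_payoff_eq_sub_add_slack {S : Type*} [Fintype S] (β a b x y w₁ w₂ : ℝ)
    (p q ξ η : S → ℝ)
    (hw₁ : w₁ = -a - β * ∑ s', p s' * η s' + x - β * ∑ s', p s' * ξ s')
    (hw₂ : w₂ = b - y + β * ∑ s', q s' * η s' + β * ∑ s', q s' * ξ s') :
    a + b + β * ∑ s', (p s' + q s') * (ξ s' + η s') = x + y - w₁ + w₂ := by
  simp only [hw₁, hw₂, add_mul, mul_add, Finset.sum_add_distrib]
  ring

theorem stmt18_general (S : Type) [Fintype S]
    (m nn : S → ℕ)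
    (r1 : ∀ s : S, Fin (m s) → ℝ) (r2 : ∀ s : S, Fin (nn s) → ℝ)
    (p1 : ∀ s : S, Fin (m s) → S → ℝ) (p2 : ∀ s : S, Fin (nn s) → S → ℝ)
    (β : ℝ)
    (ξ η : S → ℝ)
    (w1 : ∀ s : S, Fin (m s) → ℝ) (w2 : ∀ s : S, Fin (nn s) → ℝ)
    (hw1def : ∀ s i, w1 s i =
      -r1 s i - β * ∑ s', p1 s i s' * η s' + ξ s - β * ∑ s', p1 s i s' * ξ s')
    (hw2def : ∀ s j, w2 s j =
      r2 s j - η s + β * ∑ s', p2 s j s' * η s' + β * ∑ s', p2 s j s' * ξ s')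
    (hw1nonneg : ∀ s i, 0 ≤ w1 s i) (hw2nonneg : ∀ s j, 0 ≤ w2 s j)
    (i0 : ∀ s : S, Fin (m s)) (hi0 : ∀ s, w1 s (i0 s) = 0)
    (j0 : ∀ s : S, Fin (nn s)) (hj0 : ∀ s, w2 s (j0 s) = 0)
    (v : S → ℝ) (hv : ∀ s, v s = ξ s + η s) :
    (∀ s : S, ∀ i : Fin (m s),
      r1 s i + r2 s (j0 s) + β * ∑ s', (p1 s i s' + p2 s (j0 s) s') * v s' ≤ v s) ∧
    (∀ s : S, ∀ j : Fin (nn s),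
      v s ≤ r1 s (i0 s) + r2 s j + β * ∑ s', (p1 s (i0 s) s' + p2 s j s') * v s') := by
  obtain rfl : v = fun s => ξ s + η s := funext hv
  have payoff : ∀ s i j, r1 s i + r2 s j + β * ∑ s', (p1 s i s' + p2 s j s') * (ξ s' + η s') =
      ξ s + η s - w1 s i + w2 s j := fun s i j =>
    additive_payoff_eq_sub_add_slack _ _ _ _ _ _ _ _ _ _ _ (hw1def s i) (hw2def s j)
  refine ⟨fun s i => ?_, fun s j => ?_⟩
  · rw [payoff, hj0]
    linarith [hw1nonneg s i]
  · rw [payoff, hi0]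
    linarith [hw2nonneg s j]

theorem stmt18 (d : ℕ) (S : Type) [Fintype S] (hcard : Fintype.card S = d)
    (m nn : S → ℕ)
    (r1 : ∀ s : S, Fin (m s) → ℝ) (r2 : ∀ s : S, Fin (nn s) → ℝ)
    (p1 : ∀ s : S, Fin (m s) → S → ℝ) (p2 : ∀ s : S, Fin (nn s) → S → ℝ)
    (β : ℝ) (hβ : β ∈ Set.Ioo (0:ℝ) 1)
    (ξ η : S → ℝ)
    (w1 : ∀ s : S, Fin (m s) → ℝ) (w2 : ∀ s : S, Fin (nn s) → ℝ)
    (hw1def : ∀ s i, w1 s i =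
      -r1 s i - β * ∑ s', p1 s i s' * η s' + ξ s - β * ∑ s', p1 s i s' * ξ s')
    (hw2def : ∀ s j, w2 s j =
      r2 s j - η s + β * ∑ s', p2 s j s' * η s' + β * ∑ s', p2 s j s' * ξ s')
    (hw1nonneg : ∀ s i, 0 ≤ w1 s i) (hw2nonneg : ∀ s j, 0 ≤ w2 s j)
    (hcomp1 : ∀ s, η s * ∏ i, w1 s i = 0)
    (hcomp2 : ∀ s, ξ s * ∏ j, w2 s j = 0)
    (i0 : ∀ s : S, Fin (m s)) (hi0 : ∀ s, w1 s (i0 s) = 0)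
    (j0 : ∀ s : S, Fin (nn s)) (hj0 : ∀ s, w2 s (j0 s) = 0)
    (v : S → ℝ) (hv : ∀ s, v s = ξ s + η s) :
    (∀ s : S, ∀ i : Fin (m s),
      r1 s i + r2 s (j0 s) + β * ∑ s', (p1 s i s' + p2 s (j0 s) s') * v s' ≤ v s) ∧
    (∀ s : S, ∀ j : Fin (nn s),
      v s ≤ r1 s (i0 s) + r2 s j + β * ∑ s', (p1 s (i0 s) s' + p2 s j s') * v s') :=
  stmt18_general S m nn r1 r2 p1 p2 β ξ η w1 w2 hw1def hw2def hw1nonneg hw2nonneg i0 hi0 j0 hj0 v hv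
end
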